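/- Let (a_ℓ)_{ℓ≥0} be a sequence of real numbers with a₀ = 1 and a_{ℓ+1} = a₁·a_ℓ − a_{ℓ−1} for all ℓ ≥ 1 (so that a₂ = a₁² − 1). Let 0 < x < 1 be a real number such that Σ_{ℓ≥0} a_ℓ²·x^ℓ converges. Then Σ_{ℓ≥0} a_ℓ·a_{ℓ+2}·x^ℓ converges absolutely and (1 + x) · Σ_{ℓ≥0} a_ℓ·a_{ℓ+2}·x^ℓ = (a₂ − x) · Σ_{ℓ≥0} a_ℓ²·x^ℓ. -/

import Mathlib

/-!
Write `S = ∑ aₙ² xⁿ`, `U = ∑ aₙ aₙ₊₁ xⁿ` and `T = ∑ aₙ aₙ₊₂ xⁿ`; `U` converges absolutely by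
`2|aₙ aₙ₊₁| ≤ aₙ² + aₙ₊₁²`. The recurrence gives `T = a₁ U - S` termwise, and applied to the
tail of `U` it gives `U = a₁ + x (a₁ (S - 1)/x - U)`, i.e. `(1 + x) U = a₁ S`. Hence
`(1 + x) T = (a₁² - 1 - x) S = (a₂ - x) S`.
-/

theorem summable_abs_mul_mul_of_summable_sq_mul {ι : Type*} {f g w : ι → ℝ} (hw : 0 ≤ w)
    (hf : Summable (fun i => f i ^ 2 * w i)) (hg : Summable (fun i => g i ^ 2 * w i)) :
    Summable (fun i => |f i * g i * w i|) := by
  refine Summable.of_nonneg_of_le (fun _ => abs_nonneg _) (fun i => ?_) ((hf.add hg).div_const 2)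
  rw [abs_mul, abs_of_nonneg (hw i), abs_mul]
  have amgm : |f i| * |g i| ≤ (f i ^ 2 + g i ^ 2) / 2 := by
    nlinarith [sq_nonneg (|f i| - |g i|), sq_abs (f i), sq_abs (g i)]
  linarith [mul_le_mul_of_nonneg_right amgm (hw i)]

theorem Summable.mul_pow_succ {f : ℕ → ℝ} {x : ℝ} (hx : x ≠ 0)
    (hf : Summable (fun n => f n * x ^ n)) : Summable (fun n => f (n + 1) * x ^ n) := by
  refine (((summable_nat_add_iff 1).mpr hf).div_const x).congr fun n => ?_
  field_simp
  ring

theorem tsum_mul_pow_eq_add_mul_tsum_succ {f : ℕ → ℝ} {x : ℝ}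
    (hf : Summable (fun n => f n * x ^ n)) :
    ∑' n, f n * x ^ n = f 0 + x * ∑' n, f (n + 1) * x ^ n := by
  rw [hf.tsum_eq_zero_add, ← tsum_mul_left]
  simp only [pow_zero, mul_one, pow_succ]
  congr 1
  exact tsum_congr fun n => by ring

section ChebyshevRecurrence

variable {a : ℕ → ℝ} {x : ℝ}

theorem summable_abs_mul_succ_mul_pow (hx : 0 < x) (hS : Summable (fun n => a n ^ 2 * x ^ n)) :
    Summable (fun n => |a n * a (n + 1) * x ^ n|) :=
  summable_abs_mul_mul_of_summable_sq_mul (fun n => pow_nonneg hx.le n) hS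
    (hS.mul_pow_succ (f := fun n => a n ^ 2) hx.ne')

variable (hrec : ∀ n, a (n + 2) = a 1 * a (n + 1) - a n)
include hrec

theorem mul_add_two_mul_pow_eq (n : ℕ) :
    a n * a (n + 2) * x ^ n = a 1 * (a n * a (n + 1) * x ^ n) - a n ^ 2 * x ^ n := by
  rw [hrec]
  ring

theorem tsum_mul_add_two_mul_pow (hU : Summable (fun n => a n * a (n + 1) * x ^ n))
    (hS : Summable (fun n => a n ^ 2 * x ^ n)) :
    ∑' n, a n * a (n + 2) * x ^ n
      = a 1 * (∑' n, a n * a (n + 1) * x ^ n) - ∑' n, a n ^ 2 * x ^ n := by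
  rw [tsum_congr (mul_add_two_mul_pow_eq hrec), (hU.mul_left _).tsum_sub hS, tsum_mul_left]

theorem one_add_mul_tsum_mul_succ_mul_pow (h0 : a 0 = 1) (hx : x ≠ 0)
    (hU : Summable (fun n => a n * a (n + 1) * x ^ n))
    (hS : Summable (fun n => a n ^ 2 * x ^ n)) :
    (1 + x) * ∑' n, a n * a (n + 1) * x ^ n = a 1 * ∑' n, a n ^ 2 * x ^ n := by
  have hS' := hS.mul_pow_succ (f := fun n => a n ^ 2) hx
  have hS_split := tsum_mul_pow_eq_add_mul_tsum_succ (f := fun n => a n ^ 2) hS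
  have hU_split := tsum_mul_pow_eq_add_mul_tsum_succ (f := fun n => a n * a (n + 1)) hU
  have hU_tail : ∑' n, a (n + 1) * a (n + 2) * x ^ n
      = a 1 * (∑' n, a (n + 1) ^ 2 * x ^ n) - ∑' n, a n * a (n + 1) * x ^ n := by
    rw [← tsum_mul_left, ← (hS'.mul_left _).tsum_sub hU]
    exact tsum_congr fun n => by rw [hrec]; ring
  simp only [h0, zero_add, one_pow, one_mul] at hS_split hU_split
  rw [hU_tail] at hU_split
  linear_combination hU_split - a 1 * hS_split

end ChebyshevRecurrence

theorem stmt_5_general (a : ℕ → ℝ) (h0 : a 0 = 1)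
    (hrec : ∀ ℓ : ℕ, 1 ≤ ℓ → a (ℓ+1) = a 1 * a ℓ - a (ℓ-1))
    (x : ℝ) (hx0 : 0 < x)
    (hsum : Summable (fun ℓ : ℕ => (a ℓ)^2 * x^ℓ)) :
    Summable (fun ℓ : ℕ => |a ℓ * a (ℓ+2) * x^ℓ|)
      ∧ (1 + x) * (∑' ℓ : ℕ, a ℓ * a (ℓ+2) * x^ℓ)
          = (a 2 - x) * (∑' ℓ : ℕ, (a ℓ)^2 * x^ℓ) := by
  have hrec' : ∀ n, a (n + 2) = a 1 * a (n + 1) - a n := fun n => by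
    simpa using hrec (n + 1) le_add_self
  have ha2 : a 2 = a 1 ^ 2 - 1 := by rw [hrec' 0, h0]; ring
  have hU := (summable_abs_mul_succ_mul_pow hx0 hsum).of_abs
  have hT : Summable (fun n => a n * a (n + 2) * x ^ n) :=
    ((hU.mul_left (a 1)).sub hsum).congr fun n => (mul_add_two_mul_pow_eq hrec' n).symm
  refine ⟨summable_abs_iff.mpr hT, ?_⟩
  rw [tsum_mul_add_two_mul_pow hrec' hU hsum, ha2]
  linear_combination a 1 * one_add_mul_tsum_mul_succ_mul_pow hrec' h0 hx0.ne' hU hsum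

/-- Hecke-recurrence identity: `(1+x) Σ aₗ aₗ₊₂ xˡ = (a₂ − x) Σ aₗ² xˡ`. -/
theorem stmt_5 (a : ℕ → ℝ) (h0 : a 0 = 1)
    (hrec : ∀ ℓ : ℕ, 1 ≤ ℓ → a (ℓ+1) = a 1 * a ℓ - a (ℓ-1))
    (x : ℝ) (hx0 : 0 < x) (hx1 : x < 1)
    (hsum : Summable (fun ℓ : ℕ => (a ℓ)^2 * x^ℓ)) :
    Summable (fun ℓ : ℕ => |a ℓ * a (ℓ+2) * x^ℓ|)
      ∧ (1 + x) * (∑' ℓ : ℕ, a ℓ * a (ℓ+2) * x^ℓ)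
          = (a 2 - x) * (∑' ℓ : ℕ, (a ℓ)^2 * x^ℓ) :=
  stmt_5_general a h0 hrec x hx0 hsum
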